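/- arXiv:math/0102223 — 2 statements merged into one kernel-verified Lean document; each statement's English description precedes it below -/
import Mathlib

section
/- For all positive integers n, k and every partition α with at most k parts each at most n, the multiset of arm–leg pairs of the skew diagram T equals the multiset of arm–leg pairs of its 180-degree rotation T*; that is, AL(T) = AL(T*) as multisets of pairs. -/
/-- The skew diagram with rows `a,…,b`, where row `i` contains the cells
`(i,j)` for `lo i ≤ j ≤ hi i`. -/
def skewD (a b : ℕ) (lo hi : ℕ → ℕ) : Finset (ℕ × ℕ) :=
  (Finset.Icc a b).biUnion fun i => (Finset.Icc (lo i) (hi i)).image fun j => (i, j)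

/-- Arm length: number of cells of `G` in the same row, strictly to the right. -/
def arm (G : Finset (ℕ × ℕ)) (x : ℕ × ℕ) : ℕ :=
  (G.filter fun y => y.1 = x.1 ∧ x.2 < y.2).card

/-- Leg length: number of cells of `G` in the same column, strictly below
(rows are numbered bottom to top). -/
def leg (G : Finset (ℕ × ℕ)) (x : ℕ × ℕ) : ℕ :=
  (G.filter fun y => y.2 = x.2 ∧ y.1 < x.1).card

/-- Multiset of arm–leg pairs of the cells of `E`, computed in `G`. -/
def AL (G E : Finset (ℕ × ℕ)) : Multiset (ℕ × ℕ) :=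
  E.val.map fun x => (arm G x, leg G x)

/-- Multiset of hook lengths of `G`. -/
def hookMS (G : Finset (ℕ × ℕ)) : Multiset ℕ :=
  G.val.map fun x => arm G x + leg G x + 1

/-- The skew diagram `T`. -/
def TT (n k : ℕ) (α : ℕ → ℕ) : Finset (ℕ × ℕ) :=
  skewD 1 k (fun i => α 1 - α i + 1) (fun i => n + α 1 - α i)

/-- The skew diagram `V`. -/
def VV (n k : ℕ) (α : ℕ → ℕ) : Finset (ℕ × ℕ) :=
  skewD (k + 1) (2 * k) (fun i => n + α 1 - α (i - k) + 1) (fun _ => n + α 1)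

/-- The skew diagram `SQ = T ∪ V`. -/
def SQ (n k : ℕ) (α : ℕ → ℕ) : Finset (ℕ × ℕ) :=
  TT n k α ∪ VV n k α

/-- The `k × n` rectangle `R`. -/
def RR (n k : ℕ) : Finset (ℕ × ℕ) :=
  skewD 1 k (fun _ => 1) (fun _ => n)

/-- The Young diagram `D` of `α`. -/
def DD (k : ℕ) (α : ℕ → ℕ) : Finset (ℕ × ℕ) :=
  skewD 1 k (fun _ => 1) (fun i => α (k + 1 - i))

/-- The 180° rotation `T*` of `T`. -/
def Tstar (n k : ℕ) (α : ℕ → ℕ) : Finset (ℕ × ℕ) :=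
  skewD 1 k (fun i => α (k + 1 - i) - α k + 1) (fun i => n + α (k + 1 - i) - α k)

open Finset

/-! ### Auxiliary development -/

/-- A skew diagram whose `i`-th row occupies columns `β i + 1, …, β i + n`. -/
def rowsD (n k : ℕ) (β : ℕ → ℕ) : Finset (ℕ × ℕ) :=
  skewD 1 k (fun i => β i + 1) (fun i => β i + n)

lemma mem_skewD {a b : ℕ} {lo hi : ℕ → ℕ} {x : ℕ × ℕ} :
    x ∈ skewD a b lo hi ↔ a ≤ x.1 ∧ x.1 ≤ b ∧ lo x.1 ≤ x.2 ∧ x.2 ≤ hi x.1 := by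
  unfold skewD
  simp only [mem_biUnion, mem_Icc, mem_image]
  constructor
  · rintro ⟨i, ⟨h1, h2⟩, j, ⟨h3, h4⟩, rfl⟩
    exact ⟨h1, h2, h3, h4⟩
  · rintro ⟨h1, h2, h3, h4⟩
    exact ⟨x.1, ⟨h1, h2⟩, x.2, ⟨h3, h4⟩, rfl⟩

lemma skewD_congr {a b : ℕ} {lo hi lo' hi' : ℕ → ℕ}
    (h : ∀ i, a ≤ i → i ≤ b → lo i = lo' i ∧ hi i = hi' i) :
    skewD a b lo hi = skewD a b lo' hi' := by
  unfold skewD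
  refine biUnion_congr rfl ?_
  intro i hi2
  simp only [mem_Icc] at hi2
  rw [(h i hi2.1 hi2.2).1, (h i hi2.1 hi2.2).2]

/-- Leg count function: number of rows `p` with `1 ≤ p < i` and `β i ≤ β p + a`. -/
def Lleg (β : ℕ → ℕ) (a i : ℕ) : ℕ :=
  ((Finset.Ico 1 i).filter fun p => β i ≤ β p + a).card

/-- The "dual" count: number of rows `q` with `i < q ≤ k` and `β q ≤ β i + a`. -/
def Rleg (β : ℕ → ℕ) (k a i : ℕ) : ℕ :=
  ((Finset.Ioc i k).filter fun q => β q ≤ β i + a).card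

lemma arm_rowsD {n k : ℕ} {β : ℕ → ℕ} {i j : ℕ}
    (hi1 : 1 ≤ i) (hik : i ≤ k) (hj1 : β i + 1 ≤ j) (hj2 : j ≤ β i + n) :
    arm (rowsD n k β) (i, j) = β i + n - j := by
  unfold arm
  have hset : (rowsD n k β).filter (fun y => y.1 = i ∧ j < y.2)
      = (Finset.Icc (j + 1) (β i + n)).image fun j' => (i, j') := by
    ext ⟨y1, y2⟩
    simp only [mem_filter, mem_image, mem_Icc, rowsD, mem_skewD, Prod.mk.injEq]
    constructor
    · rintro ⟨⟨h1, h2, h3, h4⟩, h5, h6⟩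
      subst h5
      exact ⟨y2, ⟨by omega, by omega⟩, rfl, rfl⟩
    · rintro ⟨j', ⟨hj'1, hj'2⟩, rfl, rfl⟩
      exact ⟨⟨hi1, hik, by omega, hj'2⟩, rfl, by omega⟩
  rw [hset, Finset.card_image_of_injective _ (fun a b h => by simpa using h),
    Nat.card_Icc]
  omega

lemma leg_rowsD {n k : ℕ} {β : ℕ → ℕ} {i j : ℕ}
    (hmon : ∀ p q, 1 ≤ p → p ≤ q → q ≤ k → β p ≤ β q)
    (hi1 : 1 ≤ i) (hik : i ≤ k) (hj1 : β i + 1 ≤ j) (hj2 : j ≤ β i + n) :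
    leg (rowsD n k β) (i, j) = Lleg β (β i + n - j) i := by
  unfold leg Lleg
  have hset : (rowsD n k β).filter (fun y => y.2 = j ∧ y.1 < i)
      = ((Finset.Ico 1 i).filter fun p => β i ≤ β p + (β i + n - j)).image
          fun p => (p, j) := by
    ext ⟨y1, y2⟩
    simp only [mem_filter, mem_image, mem_Ico, rowsD, mem_skewD, Prod.mk.injEq]
    constructor
    · rintro ⟨⟨h1, h2, h3, h4⟩, h5, h6⟩
      subst h5
      exact ⟨y1, ⟨⟨h1, h6⟩, by omega⟩, rfl, rfl⟩
    · rintro ⟨p, ⟨⟨hp1, hp2⟩, hp3⟩, rfl, rfl⟩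
      have hb : β p ≤ β i := hmon p i hp1 (by omega) hik
      exact ⟨⟨hp1, by omega, by omega, by omega⟩, rfl, hp2⟩
  rw [hset, Finset.card_image_of_injective _ (fun a b h => by simpa using h)]

lemma map_val_eq_sum {γ : Type*} {δ : Type*} [DecidableEq γ] (s : Finset γ)
    (f : γ → δ) : (s.val.map fun x => ({f x} : Multiset δ)).sum = s.val.map f := by
  rw [show (s.val.map f) = ((s.val.map f).map fun a => ({a} : Multiset δ)).sum from
    (Multiset.sum_map_singleton _).symm, Multiset.map_map]
  rfl

lemma sum_singletons {γ : Type*} {δ : Type*} [DecidableEq γ] (s : Finset γ)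
    (f : γ → δ) : (∑ x ∈ s, ({f x} : Multiset δ)) = s.val.map f :=
  map_val_eq_sum s f

/-- Computation of the arm–leg multiset of `rowsD n k β`. -/
lemma AL_rowsD (n k : ℕ) (β : ℕ → ℕ)
    (hmon : ∀ p q, 1 ≤ p → p ≤ q → q ≤ k → β p ≤ β q) :
    AL (rowsD n k β) (rowsD n k β)
      = ∑ i ∈ Finset.Icc 1 k, ∑ a ∈ Finset.range n,
          ({(a, Lleg β a i)} : Multiset (ℕ × ℕ)) := by
  unfold AL
  rw [← sum_singletons (rowsD n k β) (fun x => (arm (rowsD n k β) x, leg (rowsD n k β) x))]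
  have hdecomp : ∀ f : ℕ × ℕ → Multiset (ℕ × ℕ),
      ∑ x ∈ rowsD n k β, f x
        = ∑ i ∈ Finset.Icc 1 k, ∑ j ∈ Finset.Icc (β i + 1) (β i + n), f (i, j) := by
    intro f
    unfold rowsD skewD
    rw [Finset.sum_biUnion]
    · refine Finset.sum_congr rfl fun i _ => ?_
      rw [Finset.sum_image (by intro a _ b _ h; simpa using h)]
    · intro p hp q hq hpq
      simp only [Finset.disjoint_left, mem_image, mem_Icc]
      rintro x ⟨j, _, rfl⟩ ⟨j', _, hj'⟩
      exact hpq (congrArg Prod.fst hj').symm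
  rw [hdecomp]
  refine Finset.sum_congr rfl fun i hi => ?_
  simp only [mem_Icc] at hi
  refine Finset.sum_bij' (fun j _ => β i + n - j) (fun a _ => β i + n - a) ?_ ?_ ?_ ?_ ?_
  · intro j hj
    simp only [mem_Icc] at hj
    simp only [mem_range]
    omega
  · intro a ha
    simp only [mem_range] at ha
    simp only [mem_Icc]
    omega
  · intro j hj
    simp only [mem_Icc] at hj
    omega
  · intro a ha
    simp only [mem_range] at ha
    omega
  · intro j hj
    simp only [mem_Icc] at hj
    rw [arm_rowsD hi.1 hi.2 hj.1 hj.2, leg_rowsD hmon hi.1 hi.2 hj.1 hj.2]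

/-- Level-set description of `Lleg` for a monotone `β`. -/
lemma Lleg_level {β : ℕ → ℕ} {k a i c : ℕ}
    (hmon : ∀ p q, 1 ≤ p → p ≤ q → q ≤ k → β p ≤ β q)
    (hi1 : 1 ≤ i) (hik : i ≤ k) (hc : 1 ≤ c) :
    c ≤ Lleg β a i ↔ c < i ∧ β i ≤ β (i - c) + a := by
  unfold Lleg
  constructor
  · intro h
    by_contra hcon
    push_neg at hcon
    have hex : ∃ p ∈ (Finset.Ico 1 i).filter fun p => β i ≤ β p + a, p ≤ i - c := by
      by_contra hne
      push_neg at hne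
      have hsub : ((Finset.Ico 1 i).filter fun p => β i ≤ β p + a)
          ⊆ Finset.Ico (i - c + 1) i := by
        intro p hp
        simp only [mem_filter, mem_Ico] at hp ⊢
        have := hne p (by simp only [mem_filter, mem_Ico]; exact hp)
        omega
      have := Finset.card_le_card hsub
      rw [Nat.card_Ico] at this
      omega
    obtain ⟨p, hp, hple⟩ := hex
    simp only [mem_filter, mem_Ico] at hp
    have hci : c < i := by omega
    have : β p ≤ β (i - c) := hmon p (i - c) hp.1.1 hple (by omega)
    have := hcon hci
    omega
  · rintro ⟨hci, hβ⟩
    have hsub : Finset.Icc (i - c) (i - 1)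
        ⊆ (Finset.Ico 1 i).filter fun p => β i ≤ β p + a := by
      intro p hp
      simp only [mem_Icc] at hp
      simp only [mem_filter, mem_Ico]
      have : β (i - c) ≤ β p := hmon (i - c) p (by omega) hp.1 (by omega)
      exact ⟨⟨by omega, by omega⟩, by omega⟩
    have := Finset.card_le_card hsub
    rw [Nat.card_Icc] at this
    omega

/-- Level-set description of `Rleg` for a monotone `β`. -/
lemma Rleg_level {β : ℕ → ℕ} {k a i c : ℕ}
    (hmon : ∀ p q, 1 ≤ p → p ≤ q → q ≤ k → β p ≤ β q)
    (hi1 : 1 ≤ i) (hik : i ≤ k) (hc : 1 ≤ c) :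
    c ≤ Rleg β k a i ↔ i + c ≤ k ∧ β (i + c) ≤ β i + a := by
  unfold Rleg
  constructor
  · intro h
    by_contra hcon
    push_neg at hcon
    have hex : ∃ q ∈ (Finset.Ioc i k).filter fun q => β q ≤ β i + a, i + c ≤ q := by
      by_contra hne
      push_neg at hne
      have hsub : ((Finset.Ioc i k).filter fun q => β q ≤ β i + a)
          ⊆ Finset.Ioc i (i + c - 1) := by
        intro q hq
        simp only [mem_filter, mem_Ioc] at hq ⊢
        have := hne q (by simp only [mem_filter, mem_Ioc]; exact hq)
        omega
      have := Finset.card_le_card hsub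
      rw [Nat.card_Ioc] at this
      omega
    obtain ⟨q, hq, hqge⟩ := hex
    simp only [mem_filter, mem_Ioc] at hq
    have hck : i + c ≤ k := by omega
    have : β (i + c) ≤ β q := hmon (i + c) q (by omega) hqge hq.1.2
    have := hcon hck
    omega
  · rintro ⟨hck, hβ⟩
    have hsub : Finset.Icc (i + 1) (i + c)
        ⊆ (Finset.Ioc i k).filter fun q => β q ≤ β i + a := by
      intro q hq
      simp only [mem_Icc] at hq
      simp only [mem_filter, mem_Ioc]
      have : β q ≤ β (i + c) := hmon q (i + c) (by omega) (by omega) hck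
      exact ⟨⟨by omega, by omega⟩, by omega⟩
    have := Finset.card_le_card hsub
    rw [Nat.card_Icc] at this
    omega

lemma countP_le_split (s : Multiset ℕ) (b : ℕ) :
    s.countP (fun x => b ≤ x) = s.count b + s.countP (fun x => b + 1 ≤ x) := by
  induction s using Multiset.induction_on with
  | empty => simp
  | cons a s ih =>
    rw [Multiset.countP_cons, Multiset.countP_cons, Multiset.count_cons, ih]
    split_ifs <;> omega

lemma multiset_eq_of_countP (s t : Multiset ℕ)
    (h : ∀ c, s.countP (fun x => c ≤ x) = t.countP (fun x => c ≤ x)) : s = t := by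
  refine Multiset.ext.2 fun b => ?_
  have h1 := countP_le_split s b
  have h2 := countP_le_split t b
  have := h b
  have := h (b + 1)
  omega

/-- The core combinatorial lemma: for monotone `β`, the multiset of `Lleg`s equals
the multiset of `Rleg`s. -/
lemma Lleg_multiset_eq_Rleg (k a : ℕ) (β : ℕ → ℕ)
    (hmon : ∀ p q, 1 ≤ p → p ≤ q → q ≤ k → β p ≤ β q) :
    (Finset.Icc 1 k).val.map (Lleg β a) = (Finset.Icc 1 k).val.map (Rleg β k a) := by
  refine multiset_eq_of_countP _ _ fun c => ?_
  rw [Multiset.countP_map, Multiset.countP_map]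
  show ((Finset.Icc 1 k).filter fun i => c ≤ Lleg β a i).card
      = ((Finset.Icc 1 k).filter fun i => c ≤ Rleg β k a i).card
  rcases Nat.eq_zero_or_pos c with rfl | hc
  · simp
  have hL : (Finset.Icc 1 k).filter (fun i => c ≤ Lleg β a i)
      = (Finset.Icc 1 k).filter fun i => c < i ∧ β i ≤ β (i - c) + a := by
    refine Finset.filter_congr fun i hi => ?_
    simp only [mem_Icc] at hi
    simp only [Lleg_level hmon hi.1 hi.2 hc]
  have hR : (Finset.Icc 1 k).filter (fun i => c ≤ Rleg β k a i)
      = (Finset.Icc 1 k).filter fun i => i + c ≤ k ∧ β (i + c) ≤ β i + a := by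
    refine Finset.filter_congr fun i hi => ?_
    simp only [mem_Icc] at hi
    simp only [Rleg_level hmon hi.1 hi.2 hc]
  rw [hL, hR]
  refine Finset.card_bij' (fun i _ => i - c) (fun b _ => b + c) ?_ ?_ ?_ ?_
  · intro i hi
    simp only [mem_filter, mem_Icc] at hi ⊢
    have hic : i - c + c = i := by omega
    rw [hic]
    exact ⟨⟨by omega, by omega⟩, by omega, hi.2.2⟩
  · intro b hb
    simp only [mem_filter, mem_Icc] at hb ⊢
    have hbc : b + c - c = b := by omega
    rw [hbc]
    exact ⟨⟨by omega, by omega⟩, by omega, hb.2.2⟩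
  · intro i hi
    simp only [mem_filter, mem_Icc] at hi
    omega
  · intro b hb
    simp only [mem_filter, mem_Icc] at hb
    omega

lemma rev_val_map (k : ℕ) :
    (Finset.Icc 1 k).val.map (fun i => k + 1 - i) = (Finset.Icc 1 k).val := by
  have hinj : Set.InjOn (fun i => k + 1 - i) (Finset.Icc 1 k) := by
    intro p hp q hq h
    simp only [coe_Icc, Set.mem_Icc] at hp hq
    simp only at h
    omega
  rw [← Finset.image_val_of_injOn hinj]
  congr 1
  ext b
  simp only [mem_image, mem_Icc]
  constructor
  · rintro ⟨i, hi, rfl⟩; omega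
  · intro hb; exact ⟨k + 1 - b, by omega, by omega⟩

/-- The multiset of arm–leg pairs of `T` equals that of its 180° rotation `T*`. -/
theorem AL_T_eq_AL_Tstar (n k : ℕ) (α : ℕ → ℕ) (hn : 0 < n) (hk : 0 < k)
    (hα1 : α 1 ≤ n) (hmono : ∀ i j, 1 ≤ i → i ≤ j → j ≤ k → α j ≤ α i) :
    AL (TT n k α) (TT n k α) = AL (Tstar n k α) (Tstar n k α) := by
  set βT : ℕ → ℕ := fun i => α 1 - α i with hβT
  set βS : ℕ → ℕ := fun i => α (k + 1 - i) - α k with hβS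
  -- basic bounds
  have hbound : ∀ m, 1 ≤ m → m ≤ k → α k ≤ α m ∧ α m ≤ α 1 := fun m h1 h2 =>
    ⟨hmono m k h1 h2 le_rfl, hmono 1 m le_rfl h1 h2⟩
  have hTT : TT n k α = rowsD n k βT := by
    unfold TT rowsD
    refine skewD_congr fun i h1 h2 => ⟨rfl, ?_⟩
    have := (hbound i h1 h2).2
    simp only [hβT]
    omega
  have hTS : Tstar n k α = rowsD n k βS := by
    unfold Tstar rowsD
    refine skewD_congr fun i h1 h2 => ⟨rfl, ?_⟩
    have := (hbound (k + 1 - i) (by omega) (by omega)).1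
    simp only [hβS]
    omega
  have hmonT : ∀ p q, 1 ≤ p → p ≤ q → q ≤ k → βT p ≤ βT q := by
    intro p q h1 h2 h3
    have := hmono p q h1 h2 h3
    simp only [hβT]
    omega
  have hmonS : ∀ p q, 1 ≤ p → p ≤ q → q ≤ k → βS p ≤ βS q := by
    intro p q h1 h2 h3
    have := hmono (k + 1 - q) (k + 1 - p) (by omega) (by omega) (by omega)
    simp only [hβS]
    omega
  rw [hTT, hTS, AL_rowsD n k βT hmonT, AL_rowsD n k βS hmonS]
  rw [Finset.sum_comm, Finset.sum_comm (s := Finset.Icc 1 k)]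
  refine Finset.sum_congr rfl fun a _ => ?_
  -- reduce to multiset equality of the leg counts
  rw [sum_singletons (Finset.Icc 1 k) (fun i => ((a, Lleg βT a i) : ℕ × ℕ)),
    sum_singletons (Finset.Icc 1 k) (fun i => ((a, Lleg βS a i) : ℕ × ℕ))]
  have key : (Finset.Icc 1 k).val.map (Lleg βT a)
      = (Finset.Icc 1 k).val.map (Lleg βS a) := by
    rw [Lleg_multiset_eq_Rleg k a βT hmonT]
    -- now show Rleg βT reindexed equals Lleg βS
    have hpt : ∀ i, 1 ≤ i → i ≤ k → Lleg βS a i = Rleg βT k a (k + 1 - i) := by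
      intro i h1 h2
      unfold Lleg Rleg
      refine Finset.card_bij' (fun p _ => k + 1 - p) (fun q _ => k + 1 - q) ?_ ?_ ?_ ?_
      · intro p hp
        simp only [mem_filter, mem_Ico] at hp
        simp only [mem_filter, mem_Ioc]
        obtain ⟨⟨hp1, hp2⟩, hp3⟩ := hp
        have hb1 := hbound (k + 1 - p) (by omega) (by omega)
        have hb2 := hbound (k + 1 - i) (by omega) (by omega)
        simp only [hβS] at hp3
        simp only [hβT]
        refine ⟨⟨by omega, by omega⟩, by omega⟩
      · intro q hq
        simp only [mem_filter, mem_Ioc] at hq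
        simp only [mem_filter, mem_Ico]
        obtain ⟨⟨hq1, hq2⟩, hq3⟩ := hq
        have hb1 := hbound q (by omega) (by omega)
        have hb2 := hbound (k + 1 - i) (by omega) (by omega)
        simp only [hβT] at hq3
        simp only [hβS]
        have hqq : k + 1 - (k + 1 - q) = q := by omega
        rw [hqq]
        refine ⟨⟨by omega, by omega⟩, by omega⟩
      · intro p hp
        simp only [mem_filter, mem_Ico] at hp
        omega
      · intro q hq
        simp only [mem_filter, mem_Ioc] at hq
        omega
    calc (Finset.Icc 1 k).val.map (Rleg βT k a)
        = ((Finset.Icc 1 k).val.map (fun i => k + 1 - i)).map (Rleg βT k a) := by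
          rw [rev_val_map]
      _ = (Finset.Icc 1 k).val.map (fun i => Rleg βT k a (k + 1 - i)) := by
          rw [Multiset.map_map]; rfl
      _ = (Finset.Icc 1 k).val.map (Lleg βS a) := by
          refine Multiset.map_congr rfl fun i hi => ?_
          rw [Finset.mem_val, mem_Icc] at hi
          exact (hpt i hi.1 hi.2).symm
  rw [show (fun i => ((a, Lleg βT a i) : ℕ × ℕ)) = (fun v => (a, v)) ∘ Lleg βT a from rfl,
    show (fun i => ((a, Lleg βS a i) : ℕ × ℕ)) = (fun v => (a, v)) ∘ Lleg βS a from rfl,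
    ← Multiset.map_map, ← Multiset.map_map, key]
end

section
/- Let k ≥ 1, n = k+1, α ∈ 𝓑, and 1 ≤ i ≤ k+1. Suppose some cell of T with arm length i−1 lies strictly above the diagonal of T, and let u be the smallest row index of such a cell. Then α_u + i ≤ α_{u−i} and α_{u−1} + i ≥ α_{u−i+1} (with the convention α₀ = k+1). -/
/-- `α` has Frobenius form `(λ₁,…,λ_m | λ₁−1,…,λ_m−1)` with
`k ≥ λ₁ > ⋯ > λ_m > 0`: equivalently `α_j = λ_j + j` for `1 ≤ j ≤ m`,
`α_j ≤ m` for `m < j ≤ k`, and the conjugate partition satisfies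
`α′_j = λ_j + j − 1` for `1 ≤ j ≤ m`. -/
def FrobB (k : ℕ) (α : ℕ → ℕ) (m : ℕ) (lam : ℕ → ℕ) : Prop :=
  (∀ j, 1 ≤ j → j ≤ m → 0 < lam j ∧ lam j ≤ k) ∧
  (∀ j j', 1 ≤ j → j < j' → j' ≤ m → lam j' < lam j) ∧
  (∀ j, 1 ≤ j → j ≤ m → α j = lam j + j) ∧
  (∀ j, m < j → j ≤ k → α j ≤ m) ∧
  (∀ j, 1 ≤ j → j ≤ m →
    ((Finset.Icc 1 k).filter fun i => j ≤ α i).card = lam j + j - 1)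

/-- `α ∈ 𝓑`. -/
def memB (k : ℕ) (α : ℕ → ℕ) : Prop := ∃ m lam, FrobB k α m lam

lemma mem_TT {n k : ℕ} {α : ℕ → ℕ} {a j : ℕ} :
    (a, j) ∈ TT n k α ↔ 1 ≤ a ∧ a ≤ k ∧ α 1 - α a + 1 ≤ j ∧ j ≤ n + α 1 - α a := by
  simp only [TT, skewD, Finset.mem_biUnion, Finset.mem_image, Finset.mem_Icc]
  constructor
  · rintro ⟨b, ⟨hb1, hbk⟩, j', ⟨hj1, hj2⟩, h⟩
    injection h with h1 h2
    subst h1; subst h2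
    exact ⟨hb1, hbk, hj1, hj2⟩
  · rintro ⟨ha1, hak, h1, h2⟩
    exact ⟨a, ⟨ha1, hak⟩, j, ⟨h1, h2⟩, rfl⟩

lemma arm_TT {k : ℕ} {α : ℕ → ℕ} {a j : ℕ} (ha1 : 1 ≤ a) (hak : a ≤ k)
    (hj1 : α 1 - α a + 1 ≤ j) (hj2 : j ≤ (k+1) + α 1 - α a) :
    arm (TT (k+1) k α) (a, j) = (k+1) + α 1 - α a - j := by
  show ((TT (k+1) k α).filter fun y => y.1 = a ∧ j < y.2).card = _
  have hset : (TT (k+1) k α).filter (fun y => y.1 = a ∧ j < y.2)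
      = (Finset.Icc (j+1) ((k+1) + α 1 - α a)).image (fun j' => (a, j')) := by
    ext ⟨b, c⟩
    simp only [Finset.mem_filter, Finset.mem_image, Finset.mem_Icc, mem_TT]
    constructor
    · rintro ⟨⟨hb1, hbk, hc1, hc2⟩, rfl, hjc⟩
      exact ⟨c, ⟨by omega, by omega⟩, rfl⟩
    · rintro ⟨j', ⟨hj'1, hj'2⟩, h⟩
      injection h with h1 h2
      subst h1; subst h2
      exact ⟨⟨ha1, hak, by omega, by omega⟩, rfl, by omega⟩
  rw [hset, Finset.card_image_of_injective _ (fun x y h => by simpa using h), Nat.card_Icc]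
  omega

/-- If `u` is the smallest row index of a cell of `T` with arm length `i−1`
strictly above the diagonal of `T`, then `α_u + i ≤ α_{u−i}` and
`α_{u−1} + i ≥ α_{u−i+1}` (convention `α₀ = k+1`). -/
theorem techprop_part4 (k : ℕ) (α : ℕ → ℕ) (hk : 0 < k)
    (hα1 : α 1 ≤ k + 1) (hmono : ∀ i j, 1 ≤ i → i ≤ j → j ≤ k → α j ≤ α i)
    (hB : memB k α) (hα0 : α 0 = k + 1)
    (i : ℕ) (hi1 : 1 ≤ i) (hik : i ≤ k + 1) (u : ℕ)
    (hu : ∃ j, (u, j) ∈ TT (k + 1) k α ∧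
      arm (TT (k + 1) k α) (u, j) = i - 1 ∧ k + 1 + α 1 < u + j)
    (hmin : ∀ a j, (a, j) ∈ TT (k + 1) k α →
      arm (TT (k + 1) k α) (a, j) = i - 1 → k + 1 + α 1 < a + j → u ≤ a) :
    α u + i ≤ α (u - i) ∧ α (u - i + 1) ≤ α (u - 1) + i := by
  obtain ⟨m, lam, h1, h2, h3, h4, h5⟩ := hB
  obtain ⟨j, hjmem, harm, hdiag⟩ := hu
  rw [mem_TT] at hjmem
  obtain ⟨hu1, huk, hjlo, hjhi⟩ := hjmem
  have hαu : α u ≤ α 1 := hmono 1 u le_rfl hu1 huk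
  have heq : (k+1) + α 1 - α u - j = i - 1 :=
    (arm_TT hu1 huk hjlo hjhi).symm.trans harm
  have key1 : α u + i ≤ u := by omega
  have hminA : ∀ a, 1 ≤ a → a < u → a < α a + i := by
    intro a ha hau
    by_contra hcon
    push_neg at hcon
    have hak : a ≤ k := by omega
    have hαa : α a ≤ α 1 := hmono 1 a le_rfl ha hak
    set j' := k + 2 + α 1 - α a - i with hj'
    have hmem : (a, j') ∈ TT (k+1) k α := by rw [mem_TT]; omega
    have harm2 : arm (TT (k+1) k α) (a, j') = i - 1 := by
      rw [arm_TT ha hak (by omega) (by omega)]; omega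
    have := hmin a j' hmem harm2 (by omega)
    omega
  have hum : m < u := by
    by_contra h
    push_neg at h
    have := h3 u hu1 h
    have := (h1 u hu1 h).1
    omega
  have hiu : i ≤ u := by omega
  constructor
  · -- Goal 1 : α u + i ≤ α (u - i)
    rcases Nat.eq_or_lt_of_le hiu with heq' | hlt
    · rw [show u - i = 0 by omega, hα0]; omega
    · set c := u - i with hc
      have hc1 : 1 ≤ c := by omega
      have hu2 : 2 ≤ u := by omega
      have hau1 : c ≤ α (u-1) := by
        have := hminA (u-1) (by omega) (by omega)
        omega
      have hcm : c ≤ m := by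
        by_contra hcm
        push_neg at hcm
        have := h4 (u-1) (by omega) (by omega)
        omega
      have hcount := h5 c hc1 hcm
      have hsub : Finset.Icc 1 (u-1) ⊆ (Finset.Icc 1 k).filter fun a => c ≤ α a := by
        intro a ha
        simp only [Finset.mem_Icc] at ha
        simp only [Finset.mem_filter, Finset.mem_Icc]
        refine ⟨⟨ha.1, by omega⟩, ?_⟩
        have := hmono a (u-1) ha.1 ha.2 (by omega)
        omega
      have hcard := Finset.card_le_card hsub
      rw [Nat.card_Icc, hcount] at hcard
      have hlam := (h1 c hc1 hcm).1
      have := h3 c hc1 hcm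
      omega
  · -- Goal 2 : α (u - i + 1) ≤ α (u - 1) + i
    rcases Nat.lt_or_ge 1 u with hu2 | hu1'
    · have hlow : u ≤ α (u-1) + i := by
        have := hminA (u-1) (by omega) (by omega); omega
      set c' := u - i + 1 with hc'
      rcases Nat.lt_or_ge m c' with hcm | hcm
      · have := h4 c' hcm (by omega)
        omega
      · have hc'1 : 1 ≤ c' := by omega
        have hcount := h5 c' hc'1 hcm
        have hsub : (Finset.Icc 1 k).filter (fun a => c' ≤ α a) ⊆
            Finset.Icc 1 (α (u-1) + i - 1) := by
          intro a ha
          simp only [Finset.mem_filter, Finset.mem_Icc] at ha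
          obtain ⟨⟨ha1, hak⟩, hca⟩ := ha
          simp only [Finset.mem_Icc]
          refine ⟨ha1, ?_⟩
          by_contra hcon
          push_neg at hcon
          have hau : u ≤ a := by omega
          have := hmono u a hu1 hau hak
          omega
        have hcard := Finset.card_le_card hsub
        rw [hcount, Nat.card_Icc] at hcard
        have := h3 c' hc'1 hcm
        have := (h1 c' hc'1 hcm).1
        omega
    · rw [show u - i + 1 = 1 by omega, show u - 1 = 0 by omega, hα0]
      omega
end
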